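/- Let (M,d) be a complete metric space of diameter ≤ 1 and let Θ be the monoid of bi-Katětov functions on M² under the operation (f ∙ g)(x,y) = inf_z min(f(x,z)+g(z,y),1). An element p ∈ Θ with p ≥ d is idempotent if and only if p = b_F for some closed set F ⊆ M, where b_F(x,y) = inf_{z∈F} min(d(x,z)+d(z,y),1) for F non-empty and b_∅ ≡ 1. -/

import Mathlib

/-- The operation `(f ∙ g)(x,y) = inf_z min(f(x,z) + g(z,y), 1)`. -/
noncomputable def opK {M : Type*} [MetricSpace M] (f g : M × M → ℝ) : M × M → ℝ :=
  fun p => ⨅ z : M, min (f (p.1, z) + g (z, p.2)) 1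

/-- A bi-Katětov function on `M²`. -/
def IsBiKatetov {M : Type*} [MetricSpace M] (f : M × M → ℝ) : Prop :=
  (∀ p, f p ∈ Set.Icc (0 : ℝ) 1) ∧
  (∀ x y z : M, |f (x, y) - f (x, z)| ≤ dist y z ∧ dist y z ≤ f (x, y) + f (x, z)) ∧
  (∀ x y z : M, |f (y, x) - f (z, x)| ≤ dist y z ∧ dist y z ≤ f (y, x) + f (z, x))

/-- `b_F(x,y) = inf_{z ∈ F} min(d(x,z) + d(z,y), 1)`, equal to the constant `1` for `F = ∅`. -/
noncomputable def bIdem {M : Type*} [MetricSpace M] (F : Set M) : M × M → ℝ :=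
  fun p => sInf (insert 1 {r : ℝ | ∃ z ∈ F, r = min (dist p.1 z + dist z p.2) 1})

/-
For `p ≥ d` idempotent, take `F = {w | p (w, w) = 0}`. Vanishing on the diagonal together with the
Katětov condition gives `p (x, z) ≤ d (x, z)` for `z ∈ F`, so idempotency yields `p ≤ b_F`.
Conversely, idempotency lets one pick `x = z₀, z₁, …` with
`∑_{i<n} p (zᵢ, zᵢ₊₁) + p (zₙ, y) ≤ p (x, y) + ε`; since `p ≥ d` this chain is Cauchy, and its
limit `w` lies in `F` and satisfies `d (x, w) + d (w, y) ≤ p (x, w) + p (w, y) ≤ p (x, y) + ε`.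
That `b_F` itself is an idempotent `≥ d` is a direct computation with the triangle inequality.
-/

section

open Finset Filter Topology

variable {M : Type*} [MetricSpace M]

namespace IsBiKatetov

variable {f : M × M → ℝ}

lemma nonneg (hf : IsBiKatetov f) (q : M × M) : 0 ≤ f q := (hf.1 q).1

lemma le_one (hf : IsBiKatetov f) (q : M × M) : f q ≤ 1 := (hf.1 q).2

lemma abs_sub_le_snd (hf : IsBiKatetov f) (x y z : M) : |f (x, y) - f (x, z)| ≤ dist y z :=
  (hf.2.1 x y z).1

lemma abs_sub_le_fst (hf : IsBiKatetov f) (x y z : M) : |f (y, x) - f (z, x)| ≤ dist y z :=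
  (hf.2.2 x y z).1

lemma continuous (hf : IsBiKatetov f) : Continuous f := by
  refine (LipschitzWith.of_dist_le_mul (K := 2) fun ⟨x, y⟩ ⟨x', y'⟩ => ?_).continuous
  have hy := hf.abs_sub_le_snd x y y'
  have hx := hf.abs_sub_le_fst y' x x'
  have hx' : dist x x' ≤ dist (x, y) (x', y') := by rw [Prod.dist_eq]; exact le_max_left _ _
  have hy' : dist y y' ≤ dist (x, y) (x', y') := by rw [Prod.dist_eq]; exact le_max_right _ _
  rw [Real.dist_eq]
  calc |f (x, y) - f (x', y')| ≤ |f (x, y) - f (x, y')| + |f (x, y') - f (x', y')| :=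
        abs_sub_le _ _ _
    _ ≤ 2 * dist (x, y) (x', y') := by linarith

lemma le_dist_left_of_diag_eq_zero (hf : IsBiKatetov f) {z : M} (hz : f (z, z) = 0) (x : M) :
    f (x, z) ≤ dist x z := by
  simpa [hz] using le_of_abs_le (hf.abs_sub_le_fst z x z)

lemma le_dist_right_of_diag_eq_zero (hf : IsBiKatetov f) {z : M} (hz : f (z, z) = 0) (y : M) :
    f (z, y) ≤ dist z y := by
  simpa [hz, dist_comm] using le_of_abs_le (hf.abs_sub_le_snd z y z)

lemma of_symm (hbound : ∀ q, f q ∈ Set.Icc (0 : ℝ) 1)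
    (hsymm : ∀ x y, f (x, y) = f (y, x)) (hlip : ∀ x y y', f (x, y) ≤ f (x, y') + dist y y')
    (hdist : ∀ x y, dist x y ≤ f (x, y)) : IsBiKatetov f := by
  have hsnd : ∀ x y z : M,
      |f (x, y) - f (x, z)| ≤ dist y z ∧ dist y z ≤ f (x, y) + f (x, z) := by
    intro x y z
    refine ⟨abs_sub_le_iff.2 ⟨by linarith [hlip x y z], ?_⟩, ?_⟩
    · linarith [hlip x z y, dist_comm y z]
    · linarith [dist_triangle y x z, hdist x y, hdist x z, dist_comm y x]
  refine ⟨hbound, hsnd, fun x y z => ?_⟩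
  rw [hsymm y x, hsymm z x]
  exact hsnd x y z

end IsBiKatetov

lemma opK_apply_le {f g : M × M → ℝ} (hf : ∀ q, 0 ≤ f q) (hg : ∀ q, 0 ≤ g q) (x z y : M) :
    opK f g (x, y) ≤ min (f (x, z) + g (z, y)) 1 :=
  ciInf_le ⟨0, by rintro _ ⟨u, rfl⟩; exact le_min (add_nonneg (hf _) (hg _)) zero_le_one⟩ z

lemma le_opK_apply {f g : M × M → ℝ} {r : ℝ} {x y : M}
    (h : ∀ z, r ≤ min (f (x, z) + g (z, y)) 1) : r ≤ opK f g (x, y) :=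
  have : Nonempty M := ⟨x⟩
  le_ciInf h

lemma IsBiKatetov.le_opK_self {f : M × M → ℝ} (hf : IsBiKatetov f)
    (hdist : ∀ x y, dist x y ≤ f (x, y)) : f ≤ opK f f := by
  rintro ⟨x, y⟩
  refine le_opK_apply fun z => le_min ?_ (hf.le_one _)
  linarith [le_of_abs_le (hf.abs_sub_le_snd x y z), hdist z y, dist_comm y z]

section bIdem

lemma bIdem_bddBelow (F : Set M) (x y : M) :
    BddBelow (insert 1 {r : ℝ | ∃ z ∈ F, r = min (dist x z + dist z y) 1}) := by
  refine ⟨0, ?_⟩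
  rintro _ (rfl | ⟨z, -, rfl⟩)
  · exact zero_le_one
  · exact le_min (by positivity) zero_le_one

lemma le_bIdem_iff {F : Set M} {x y : M} {r : ℝ} :
    r ≤ bIdem F (x, y) ↔ r ≤ 1 ∧ ∀ z ∈ F, r ≤ dist x z + dist z y := by
  have hne : (insert 1 {r : ℝ | ∃ z ∈ F, r = min (dist x z + dist z y) 1}).Nonempty :=
    ⟨1, Set.mem_insert _ _⟩
  simp only [bIdem, le_csInf_iff (bIdem_bddBelow F x y) hne, Set.forall_mem_insert]
  constructor
  · rintro ⟨h1, h⟩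
    exact ⟨h1, fun z hz => (h _ ⟨z, hz, rfl⟩).trans (min_le_left _ _)⟩
  · rintro ⟨h1, h⟩
    exact ⟨h1, by rintro _ ⟨z, hz, rfl⟩; exact le_min (h z hz) h1⟩

lemma bIdem_le_one (F : Set M) (x y : M) : bIdem F (x, y) ≤ 1 :=
  csInf_le (bIdem_bddBelow F x y) (Set.mem_insert _ _)

lemma bIdem_le_of_mem {F : Set M} {z : M} (hz : z ∈ F) (x y : M) :
    bIdem F (x, y) ≤ dist x z + dist z y :=
  (csInf_le (bIdem_bddBelow F x y) (Set.mem_insert_of_mem _ ⟨z, hz, rfl⟩)).trans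
    (min_le_left _ _)

lemma bIdem_nonneg (F : Set M) (x y : M) : 0 ≤ bIdem F (x, y) :=
  le_bIdem_iff.2 ⟨zero_le_one, fun _ _ => by positivity⟩

lemma bIdem_symm (F : Set M) (x y : M) : bIdem F (x, y) = bIdem F (y, x) := by
  refine le_antisymm ?_ ?_ <;> refine le_bIdem_iff.2 ⟨bIdem_le_one _ _ _, fun z hz => ?_⟩
  · linarith [bIdem_le_of_mem hz x y, dist_comm x z, dist_comm z y]
  · linarith [bIdem_le_of_mem hz y x, dist_comm y z, dist_comm z x]

lemma bIdem_le_add_dist (F : Set M) (x y y' : M) :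
    bIdem F (x, y) ≤ bIdem F (x, y') + dist y y' := by
  rw [← sub_le_iff_le_add]
  refine le_bIdem_iff.2 ⟨by linarith [bIdem_le_one F x y, dist_nonneg (x := y) (y := y')],
    fun z hz => ?_⟩
  linarith [bIdem_le_of_mem hz x y, dist_triangle z y' y, dist_comm y' y]

lemma dist_le_bIdem (hdiam : ∀ x y : M, dist x y ≤ 1) (F : Set M) (x y : M) :
    dist x y ≤ bIdem F (x, y) :=
  le_bIdem_iff.2 ⟨hdiam x y, fun z _ => dist_triangle x z y⟩

lemma isBiKatetov_bIdem (hdiam : ∀ x y : M, dist x y ≤ 1) (F : Set M) :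
    IsBiKatetov (bIdem F) :=
  .of_symm (fun q => ⟨bIdem_nonneg F q.1 q.2, bIdem_le_one F q.1 q.2⟩) (bIdem_symm F)
    (bIdem_le_add_dist F) (dist_le_bIdem hdiam F)

lemma opK_bIdem_self (hdiam : ∀ x y : M, dist x y ≤ 1) (F : Set M) :
    opK (bIdem F) (bIdem F) = bIdem F := by
  have hb := isBiKatetov_bIdem hdiam F
  refine le_antisymm (fun ⟨x, y⟩ => le_bIdem_iff.2 ⟨?_, fun z hz => ?_⟩)
    (hb.le_opK_self (dist_le_bIdem hdiam F))
  · exact (opK_apply_le hb.nonneg hb.nonneg x x y).trans (min_le_right _ _)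
  · have hxz : bIdem F (x, z) ≤ dist x z := by simpa using bIdem_le_of_mem hz x z
    have hzy : bIdem F (z, y) ≤ dist z y := by simpa using bIdem_le_of_mem hz z y
    linarith [(opK_apply_le hb.nonneg hb.nonneg x z y).trans (min_le_left _ _)]

end bIdem

section Idempotent

variable {p : M × M → ℝ}

lemma le_add_of_opK_self_eq (hp : ∀ q, 0 ≤ p q) (hidem : opK p p = p) (x z y : M) :
    p (x, y) ≤ p (x, z) + p (z, y) := by
  have := opK_apply_le hp hp x z y
  rw [hidem] at this
  exact this.trans (min_le_left _ _)

lemma le_bIdem_of_opK_self_eq (hp : IsBiKatetov p) (hidem : opK p p = p) (x y : M) :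
    p (x, y) ≤ bIdem {w | p (w, w) = 0} (x, y) := by
  refine le_bIdem_iff.2 ⟨hp.le_one _, fun z hz => ?_⟩
  linarith [le_add_of_opK_self_eq hp.nonneg hidem x z y,
    hp.le_dist_left_of_diag_eq_zero hz x, hp.le_dist_right_of_diag_eq_zero hz y]

lemma exists_add_lt_of_opK_self_eq (hidem : opK p p = p) {a y : M} {δ : ℝ} (hδ : 0 < δ)
    (h1 : p (a, y) + δ ≤ 1) : ∃ u, p (a, u) + p (u, y) < p (a, y) + δ := by
  have : Nonempty M := ⟨a⟩
  have hlt : opK p p (a, y) < p (a, y) + δ := by rw [hidem]; linarith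
  obtain ⟨u, hu⟩ := exists_lt_of_ciInf_lt hlt
  exact ⟨u, (min_lt_iff.1 hu).resolve_right h1.not_gt⟩

/-- Iterating almost-optimal intermediate points, with errors `δ n` of total sum at most `ε`;
staying below `1` guarantees that the truncation at `1` in `opK` never interferes. -/
lemma exists_seq_sum_add_le_of_opK_self_eq (hp : ∀ q, 0 ≤ p q) (hidem : opK p p = p)
    (x y : M) {ε : ℝ} (hε : 0 < ε) (h1 : p (x, y) + ε < 1) :
    ∃ z : ℕ → M, z 0 = x ∧
      ∀ n, ∑ i ∈ range n, p (z i, z (i + 1)) + p (z n, y) ≤ p (x, y) + ε := by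
  obtain ⟨δ, hδ, c, hδc, hcε⟩ := posSumOfEncodable hε ℕ
  have hδsum : ∀ n, ∑ i ∈ range n, δ i ≤ ε := fun n =>
    (sum_le_hasSum _ (fun i _ => (hδ i).le) hδc).trans hcε
  have hstep : ∀ a n, ∃ u, p (a, y) + δ n ≤ 1 → p (a, u) + p (u, y) < p (a, y) + δ n := by
    intro a n
    by_cases h : p (a, y) + δ n ≤ 1
    · obtain ⟨u, hu⟩ := exists_add_lt_of_opK_self_eq hidem (hδ n) h
      exact ⟨u, fun _ => hu⟩
    · exact ⟨a, fun h' => absurd h' h⟩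
  choose s hs using hstep
  let z : ℕ → M := fun n => Nat.rec x (fun k zk => s zk k) n
  have hinv : ∀ n, ∑ i ∈ range n, p (z i, z (i + 1)) + p (z n, y)
      ≤ p (x, y) + ∑ i ∈ range n, δ i := by
    intro n
    induction n with
    | zero => simp [z]
    | succ n ih =>
      have hz : z (n + 1) = s (z n) n := rfl
      have hS : 0 ≤ ∑ i ∈ range n, p (z i, z (i + 1)) := sum_nonneg fun i _ => hp _
      have hδn := hδsum (n + 1)
      rw [sum_range_succ] at hδn ⊢
      rw [sum_range_succ, hz]
      linarith [hs (z n) n (by linarith)]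
  exact ⟨z, rfl, fun n => (hinv n).trans (by linarith [hδsum n])⟩

/-- The point `w` is the limit of the chain `z`, which is Cauchy because `dist ≤ p`; the vanishing
of `p (z n, z (n + 1))` passes to `p (w, w)` by continuity. -/
lemma exists_diag_eq_zero_of_sum_add_le [CompleteSpace M] (hp : IsBiKatetov p)
    (hdist : ∀ a b, dist a b ≤ p (a, b)) (htri : ∀ a b c, p (a, c) ≤ p (a, b) + p (b, c))
    {z : ℕ → M} {y : M} {C : ℝ}
    (hz : ∀ n, ∑ i ∈ range n, p (z i, z (i + 1)) + p (z n, y) ≤ C) :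
    ∃ w, p (w, w) = 0 ∧ p (z 0, w) + p (w, y) ≤ C := by
  have hsum : Summable fun n => p (z n, z (n + 1)) :=
    summable_of_sum_range_le (fun _ => hp.nonneg _)
      fun n => (le_add_of_nonneg_right (hp.nonneg _)).trans (hz n)
  obtain ⟨w, hw⟩ := cauchySeq_tendsto_of_complete
    (cauchySeq_of_dist_le_of_summable _ (fun n => hdist _ _) hsum)
  have hw' : Tendsto (fun n => z (n + 1)) atTop (𝓝 w) := hw.comp (tendsto_add_atTop_nat 1)
  have hchain : ∀ n, p (z 0, z (n + 1)) ≤ ∑ i ∈ range (n + 1), p (z i, z (i + 1)) := by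
    intro n
    induction n with
    | zero => simp
    | succ n ih =>
      rw [sum_range_succ]
      linarith [htri (z 0) (z (n + 1)) (z (n + 2))]
  refine ⟨w, tendsto_nhds_unique ?_ hsum.tendsto_atTop_zero, ?_⟩
  · exact (hp.continuous.tendsto (w, w)).comp (hw.prodMk_nhds hw')
  · refine le_of_tendsto'
      (((hp.continuous.tendsto _).comp (tendsto_const_nhds.prodMk_nhds hw')).add
        ((hp.continuous.tendsto _).comp (hw'.prodMk_nhds tendsto_const_nhds))) fun n => ?_
    simp only [Function.comp_apply]
    linarith [hchain n, hz (n + 1)]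

lemma bIdem_le_of_opK_self_eq [CompleteSpace M] (hp : IsBiKatetov p)
    (hdist : ∀ a b, dist a b ≤ p (a, b)) (hidem : opK p p = p) (x y : M) :
    bIdem {w | p (w, w) = 0} (x, y) ≤ p (x, y) := by
  refine le_of_forall_pos_le_add fun ε hε => ?_
  by_cases h1 : 1 ≤ p (x, y) + ε
  · exact (bIdem_le_one _ x y).trans h1
  obtain ⟨z, rfl, hz⟩ :=
    exists_seq_sum_add_le_of_opK_self_eq hp.nonneg hidem x y hε (not_le.1 h1)
  obtain ⟨w, hw, hxwy⟩ :=
    exists_diag_eq_zero_of_sum_add_le hp hdist (le_add_of_opK_self_eq hp.nonneg hidem) hz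
  linarith [bIdem_le_of_mem (F := {w | p (w, w) = 0}) hw (z 0) y, hdist (z 0) w, hdist w y]

lemma isClosed_setOf_diag_eq_zero (hp : IsBiKatetov p) : IsClosed {w : M | p (w, w) = 0} :=
  isClosed_eq (hp.continuous.comp (continuous_id.prodMk continuous_id)) continuous_const

end Idempotent

end

/-- Each `b_F` (for `F ⊆ M` closed) is an idempotent `≥ d` in `Θ`, and an
element `p ≥ d` of `Θ` is idempotent iff `p = b_F` for some closed `F ⊆ M`. -/
theorem stmt_16 {M : Type*} [MetricSpace M] [CompleteSpace M]
    (hdiam : ∀ x y : M, dist x y ≤ 1) :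
    (∀ F : Set M, IsClosed F → IsBiKatetov (bIdem F) ∧
      (fun p : M × M => dist p.1 p.2) ≤ bIdem F ∧ opK (bIdem F) (bIdem F) = bIdem F) ∧
    ∀ p : M × M → ℝ, IsBiKatetov p → (fun q : M × M => dist q.1 q.2) ≤ p →
      (opK p p = p ↔ ∃ F : Set M, IsClosed F ∧ p = bIdem F) := by
  refine ⟨fun F _ => ⟨isBiKatetov_bIdem hdiam F, fun q => dist_le_bIdem hdiam F q.1 q.2,
    opK_bIdem_self hdiam F⟩, fun p hp hd => ⟨fun hidem => ?_, ?_⟩⟩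
  · have hdist : ∀ a b, dist a b ≤ p (a, b) := fun a b => hd (a, b)
    exact ⟨_, isClosed_setOf_diag_eq_zero hp, funext fun ⟨x, y⟩ =>
      (le_bIdem_of_opK_self_eq hp hidem x y).antisymm
        (bIdem_le_of_opK_self_eq hp hdist hidem x y)⟩
  · rintro ⟨F, -, rfl⟩
    exact opK_bIdem_self hdiam F
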